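/- arXiv:1006.4327 — 8 statements merged into one kernel-verified Lean document; each statement's English description precedes it below -/
import Mathlib

section
/- For any real t, the matrix P_n G_n(t) factors as E_{n-1}(t) · ... · E_1(t), where E_k(t) = Σ_{j=1}^{k} e_j e_j^T + Σ_{j=k+1}^{n} e_j (e_{j-1} + t·e_j)^T. -/
/-- Entries of the partial product `E_m ⋯ E_1`. -/
def fAux (t : ℝ) (m i j : ℕ) : ℝ :=
  if i - m ≤ j then ((min i m).choose (j - (i - m)) : ℝ) * t ^ (j - (i - m)) else 0

lemma fAux_of_le (t : ℝ) {m i : ℕ} (j : ℕ) (h : i ≤ m) :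
    fAux t m i j = (i.choose j : ℝ) * t ^ j := by
  unfold fAux
  rw [Nat.sub_eq_zero_of_le h, min_eq_left h]
  simp

lemma fAux_step (t : ℝ) (m i j : ℕ) (h : m + 1 ≤ i) :
    fAux t m (i - 1) j + t * fAux t m i j = fAux t (m + 1) i j := by
  unfold fAux
  rw [show i - 1 - m = i - (m + 1) from by omega,
      show i - m = (i - (m + 1)) + 1 from by omega,
      show min (i - 1) m = m from by omega,
      show min i m = m from by omega,
      show min i (m + 1) = m + 1 from by omega]
  set d := i - (m + 1) with hd
  by_cases h1 : d + 1 ≤ j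
  · rw [if_pos h1, if_pos (by omega : d ≤ j), if_pos (by omega : d ≤ j)]
    have hk : j - d = (j - d - 1) + 1 := by omega
    have hk2 : j - (d + 1) = j - d - 1 := by omega
    rw [hk2, hk, Nat.choose_succ_succ]
    push_cast
    ring
  · rw [if_neg h1]
    by_cases h2 : d ≤ j
    · have hj : j = d := by omega
      rw [if_pos h2, if_pos h2, hj]
      simp
    · rw [if_neg h2, if_neg h2]
      simp

/-- For any real `t`, `P_n G_n(t) = E_{n-1}(t) · ... · E_1(t)`,
where `E_k(t) = Σ_{j=1}^{k} e_j e_j^T + Σ_{j=k+1}^{n} e_j (e_{j-1} + t·e_j)^T`. -/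
theorem pascal_g_bidiagonal_factorization (n : ℕ) (hn : 1 ≤ n) (t : ℝ)
    (P : Matrix (Fin n) (Fin n) ℝ)
    (hP : ∀ i j : Fin n, P i j = if (j : ℕ) ≤ (i : ℕ) then ((i : ℕ).choose j : ℝ) else 0)
    (G : ℝ → Matrix (Fin n) (Fin n) ℝ)
    (hG : ∀ s, G s = Matrix.diagonal (fun i : Fin n => s ^ (i : ℕ)))
    (E : ℕ → Matrix (Fin n) (Fin n) ℝ)
    (hE : ∀ k, ∀ i j : Fin n, E k i j =
      if (i : ℕ) < k then (if i = j then 1 else 0)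
      else if (i : ℕ) = (j : ℕ) + 1 then 1 else if i = j then t else 0) :
    P * G t = (((List.range (n - 1)).reverse).map (fun k => E (k + 1))).prod := by
  have key : ∀ m, ∀ i j : Fin n,
      (((List.range m).reverse).map (fun k => E (k + 1))).prod i j = fAux t m (i : ℕ) (j : ℕ) := by
    intro m
    induction m with
    | zero =>
      intro i j
      show (1 : Matrix (Fin n) (Fin n) ℝ) i j = _
      rw [Matrix.one_apply]
      unfold fAux
      rw [Nat.sub_zero, Nat.min_zero]
      by_cases h : i = j
      · subst h; simp
      · have hne : (i : ℕ) ≠ (j : ℕ) := fun hh => h (Fin.ext hh)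
        rw [if_neg h]
        by_cases hc : (i : ℕ) ≤ (j : ℕ)
        · rw [if_pos hc, Nat.choose_eq_zero_of_lt (by omega)]
          simp
        · rw [if_neg hc]
    | succ m ih =>
      intro i j
      rw [List.range_succ, List.reverse_append, List.reverse_singleton,
          List.singleton_append, List.map_cons, List.prod_cons, Matrix.mul_apply]
      by_cases hi : (i : ℕ) < m + 1
      · have hrow : ∀ k : Fin n, E (m + 1) i k = if i = k then 1 else 0 := fun k => by
          rw [hE, if_pos hi]
        simp only [hrow, ih, ite_mul, one_mul, zero_mul, Finset.sum_ite_eq,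
          Finset.mem_univ, if_true]
        rw [fAux_of_le t (j : ℕ) (by omega : (i : ℕ) ≤ m),
            fAux_of_le t (j : ℕ) (by omega : (i : ℕ) ≤ m + 1)]
      · have h1 : 1 ≤ (i : ℕ) := by omega
        have hlt : (i : ℕ) - 1 < n := by omega
        set i' : Fin n := ⟨(i : ℕ) - 1, hlt⟩ with hi'def
        have hii' : (i' : ℕ) = (i : ℕ) - 1 := rfl
        have hrow : ∀ k : Fin n,
            E (m + 1) i k = (if i' = k then 1 else 0) + (if i = k then t else 0) := by
          intro k
          rw [hE, if_neg hi]
          by_cases hk : (i : ℕ) = (k : ℕ) + 1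
          · have e1 : i' = k := Fin.ext (by omega)
            have e2 : i ≠ k := fun hh => by
              have := congrArg Fin.val hh; omega
            rw [if_pos hk, if_pos e1, if_neg e2]
            ring
          · have e1 : i' ≠ k := fun hh => by
              have := congrArg Fin.val hh
              simp only [hii'] at this
              omega
            rw [if_neg hk, if_neg e1, zero_add]
        simp only [hrow, ih, add_mul, ite_mul, one_mul, zero_mul,
          Finset.sum_add_distrib, Finset.sum_ite_eq, Finset.mem_univ, if_true]
        exact fAux_step t m (i : ℕ) (j : ℕ) (by omega)
  ext i j
  rw [key (n - 1) i j, hG, Matrix.mul_diagonal, hP,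
      fAux_of_le t (j : ℕ) (by omega : (i : ℕ) ≤ n - 1)]
  by_cases h : (j : ℕ) ≤ (i : ℕ)
  · rw [if_pos h]
  · rw [if_neg h, Nat.choose_eq_zero_of_lt (by omega)]
    simp
end

section
/- For any real t, the Bernstein matrix B_n^e(t), with entries (B_n^e(t))_{ij} = C(i-1, j-1) t^{j-1} (1-t)^{i-j} for i ≥ j and 0 otherwise, factors as B_n^e(t) = E_{n-1}^e(t) · ... · E_1^e(t), where E_k^e(t) = Σ_{j=1}^{k} e_j e_j^T + Σ_{j=k+1}^{n} e_j ((1-t)e_{j-1} + t·e_j)^T. -/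
lemma bb_aux (n : ℕ) (t : ℝ) (E : ℕ → Matrix (Fin n) (Fin n) ℝ)
    (hE : ∀ k, ∀ i j : Fin n, E k i j =
      if (i : ℕ) < k then (if i = j then 1 else 0)
      else if (i : ℕ) = (j : ℕ) + 1 then 1 - t else if i = j then t else 0) :
    ∀ m, ∀ i j : Fin n,
      ((((List.range m).reverse).map (fun k => E (k + 1))).prod) i j =
      if (j : ℕ) ≤ (i : ℕ) ∧ (i : ℕ) - (j : ℕ) ≤ m then
        ((min (i : ℕ) m).choose (min (i : ℕ) m - ((i : ℕ) - (j : ℕ))) : ℝ) *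
          t ^ (min (i : ℕ) m - ((i : ℕ) - (j : ℕ))) * (1 - t) ^ ((i : ℕ) - (j : ℕ))
      else 0 := by
  intro m
  induction m with
  | zero =>
    intro i j
    simp only [List.range_zero, List.reverse_nil, List.map_nil, List.prod_nil,
      Matrix.one_apply, Nat.le_zero, Nat.min_zero]
    by_cases h : i = j
    · subst h
      simp
    · have h2 : ¬((j : ℕ) ≤ (i : ℕ) ∧ (i : ℕ) - (j : ℕ) = 0) := by
        intro ⟨h1, h2⟩
        exact h (Fin.ext (by omega))
      rw [if_neg h, if_neg h2]
  | succ m IH =>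
    intro i j
    rw [List.range_succ, List.reverse_append]
    simp only [List.reverse_singleton, List.singleton_append, List.map_cons, List.prod_cons]
    rw [Matrix.mul_apply]
    set P := ((((List.range m).reverse).map (fun k => E (k + 1))).prod) with hP
    by_cases hi : (i : ℕ) < m + 1
    · have hrow : ∀ k : Fin n, E (m + 1) i k = if i = k then 1 else 0 := by
        intro k
        rw [hE]
        rw [if_pos hi]
      have hsum : (∑ k, E (m + 1) i k * P k j) = P i j := by
        simp [hrow, ite_mul]
      rw [hsum, IH]
      have h1 : min (i : ℕ) m = (i : ℕ) := by omega
      have h2 : min (i : ℕ) (m + 1) = (i : ℕ) := by omega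
      rw [h1, h2]
      by_cases hji : (j : ℕ) ≤ (i : ℕ)
      · have h3 : (i : ℕ) - (j : ℕ) ≤ m := by omega
        have h4 : (i : ℕ) - (j : ℕ) ≤ m + 1 := by omega
        rw [if_pos ⟨hji, h3⟩, if_pos ⟨hji, h4⟩]
      · rw [if_neg (by tauto), if_neg (by tauto)]
    · -- i ≥ m + 1, in particular i ≥ 1
      have hi1 : m + 1 ≤ (i : ℕ) := by omega
      have hi0 : 1 ≤ (i : ℕ) := by omega
      set i' : Fin n := ⟨(i : ℕ) - 1, by omega⟩ with hi'
      have hrow : ∀ k : Fin n, E (m + 1) i k =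
          (if k = i' then (1 - t) else 0) + (if k = i then t else 0) := by
        intro k
        rw [hE, if_neg hi]
        by_cases hk1 : (i : ℕ) = (k : ℕ) + 1
        · have hki' : k = i' := Fin.ext (by simp [hi']; omega)
          have hki : ¬ k = i := by intro h; subst h; omega
          rw [if_pos hk1, if_pos hki', if_neg hki]
          ring
        · rw [if_neg hk1]
          have hki' : ¬ k = i' := by
            intro h; subst h; simp [hi'] at hk1; omega
          rw [if_neg hki']
          by_cases hk2 : i = k
          · subst hk2; simp
          · rw [if_neg hk2, if_neg (fun h => hk2 h.symm)]
            simp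
      have hsum : (∑ k, E (m + 1) i k * P k j) = (1 - t) * P i' j + t * P i j := by
        simp only [hrow, add_mul, ite_mul, zero_mul, Finset.sum_add_distrib]
        rw [Finset.sum_ite_eq' Finset.univ i' (fun k => (1 - t) * P k j),
          Finset.sum_ite_eq' Finset.univ i (fun k => t * P k j)]
        simp
      rw [hsum, IH, IH]
      have hmin1 : min ((i' : ℕ)) m = m := by simp [hi']; omega
      have hmin2 : min ((i : ℕ)) m = m := by omega
      have hmin3 : min ((i : ℕ)) (m + 1) = m + 1 := by omega
      rw [hmin1, hmin2, hmin3]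
      have hiv : (i' : ℕ) = (i : ℕ) - 1 := rfl
      split_ifs with h1 h2 h3 h4 h5 h6 h7 h8 h9 h10 h11 h12
      all_goals try (exfalso; omega)
      · -- main case: 1 ≤ i - j ≤ m
        obtain ⟨c, hc⟩ : ∃ c, (i' : ℕ) - (j : ℕ) = c := ⟨_, rfl⟩
        have hic : (i : ℕ) - (j : ℕ) = c + 1 := by omega
        obtain ⟨b, hb⟩ : ∃ b, m = b + c + 1 := ⟨m - c - 1, by omega⟩
        have e1 : m - c = b + 1 := by omega
        have e2 : m - (c + 1) = b := by omega
        have e3 : m + 1 - (c + 1) = b + 1 := by omega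
        rw [hc, hic, e1, e2, e3, Nat.choose_succ_succ]
        simp only [pow_succ]
        push_cast
        ring
      · -- i - j = m + 1
        have hc : (i' : ℕ) - (j : ℕ) = m := by omega
        have hic : (i : ℕ) - (j : ℕ) = m + 1 := by omega
        rw [hc, hic, Nat.sub_self, (show m + 1 - (m + 1) = 0 by omega)]
        simp only [Nat.choose_zero_right, pow_zero, Nat.cast_one, pow_succ]
        ring
      · -- i = j
        have hic : (i : ℕ) - (j : ℕ) = 0 := by omega
        rw [hic, Nat.sub_zero, Nat.sub_zero, Nat.choose_self, Nat.choose_self]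
        simp only [pow_zero, Nat.cast_one, pow_succ]
        ring
      · ring




/-- The Bernstein matrix `B_n^e(t)` factors as
`E_{n-1}^e(t) · ... · E_1^e(t)`, where
`E_k^e(t) = Σ_{j=1}^{k} e_j e_j^T + Σ_{j=k+1}^{n} e_j ((1-t)e_{j-1} + t·e_j)^T`. -/
theorem bernstein_bidiagonal_factorization (n : ℕ) (hn : 1 ≤ n) (t : ℝ)
    (B : Matrix (Fin n) (Fin n) ℝ)
    (hB : ∀ i j : Fin n, B i j =
      if (j : ℕ) ≤ (i : ℕ) then
        ((i : ℕ).choose j : ℝ) * t ^ (j : ℕ) * (1 - t) ^ ((i : ℕ) - (j : ℕ))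
      else 0)
    (E : ℕ → Matrix (Fin n) (Fin n) ℝ)
    (hE : ∀ k, ∀ i j : Fin n, E k i j =
      if (i : ℕ) < k then (if i = j then 1 else 0)
      else if (i : ℕ) = (j : ℕ) + 1 then 1 - t else if i = j then t else 0) :
    B = (((List.range (n - 1)).reverse).map (fun k => E (k + 1))).prod := by
  ext i j
  rw [hB, bb_aux n t E hE (n - 1) i j]
  have hi : (i : ℕ) ≤ n - 1 := by omega
  have hmin : min (i : ℕ) (n - 1) = (i : ℕ) := by omega
  rw [hmin]
  by_cases hji : (j : ℕ) ≤ (i : ℕ)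
  · have h1 : (i : ℕ) - (j : ℕ) ≤ n - 1 := by omega
    rw [if_pos hji, if_pos ⟨hji, h1⟩]
    have h2 : (i : ℕ) - ((i : ℕ) - (j : ℕ)) = (j : ℕ) := by omega
    rw [h2]
  · rw [if_neg hji, if_neg (by tauto)]
end

section
/- For every real s, the Bernstein matrix admits the spectral factorization B_n^e(s) = P_n G_n(s) P_n^{-1}, where P_n is the lower triangular Pascal matrix and G_n(s) = diag(1, s, ..., s^{n-1}). -/
/-!
Column `k` of `P` is an eigenvector of `B` for the eigenvalue `s ^ k`: by
`C(i,j) C(j,k) = C(i,k) C(i-k,j-k)` the entry `(B P)ᵢₖ` is `C(i,k) s^k` times the binomial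
expansion of `(s + (1 - s)) ^ (i - k) = 1`. So `B P = P G`, and `P` is unitriangular,
hence invertible.
-/

open Finset

theorem sum_choose_mul_choose_mul_pow {R : Type*} [CommRing R] (x y : R) (i k : ℕ) :
    ∑ j ∈ range (i + 1), (i.choose j * j.choose k : R) * x ^ j * y ^ (i - j) =
      i.choose k * x ^ k * (x + y) ^ (i - k) := by
  rcases lt_or_ge i k with hik | hki
  · rw [Nat.choose_eq_zero_of_lt hik, Nat.cast_zero, zero_mul, zero_mul]
    refine sum_eq_zero fun j hj => ?_
    rw [Nat.choose_eq_zero_of_lt (n := j) ((mem_range.1 hj).trans_le hik), Nat.cast_zero,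
      mul_zero, zero_mul, zero_mul]
  rw [← sum_range_add_sum_Ico _ (by omega : k ≤ i + 1), sum_Ico_eq_sum_range,
    show i + 1 - k = i - k + 1 by omega, add_pow, mul_sum]
  have below : ∑ j ∈ range k, (i.choose j * j.choose k : R) * x ^ j * y ^ (i - j) = 0 :=
    sum_eq_zero fun j hj => by
      rw [Nat.choose_eq_zero_of_lt (n := j) (mem_range.1 hj), Nat.cast_zero, mul_zero,
        zero_mul, zero_mul]
  rw [below, zero_add]
  refine sum_congr rfl fun m _ => ?_
  have hchoose : (i.choose (k + m) * (k + m).choose k : R) = i.choose k * (i - k).choose m := by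
    have h := Nat.choose_mul (n := i) (Nat.le_add_right k m)
    rw [Nat.add_sub_cancel_left] at h
    rw [← Nat.cast_mul, ← Nat.cast_mul, h]
  rw [hchoose, pow_add, show i - (k + m) = i - k - m by omega]
  ring

namespace Matrix

variable (R : Type*) [CommRing R] (n : ℕ)

def pascal : Matrix (Fin n) (Fin n) R :=
  of fun i j => ((i : ℕ).choose j : R)

variable {R}

/-- No `j ≤ i` guard is needed: `Nat.choose` already vanishes above the diagonal. -/
def bernstein (s : R) : Matrix (Fin n) (Fin n) R :=
  of fun i j => ((i : ℕ).choose j : R) * s ^ (j : ℕ) * (1 - s) ^ ((i : ℕ) - j)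

theorem pascal_isLowerTriangular : (pascal R n).IsLowerTriangular := fun i j hij =>
  by simp [pascal, Nat.choose_eq_zero_of_lt (show (i : ℕ) < j from hij)]

theorem det_pascal : (pascal R n).det = 1 := by
  rw [det_of_isLowerTriangular _ (pascal_isLowerTriangular n)]
  simp [pascal]

theorem bernstein_mul_pascal (s : R) :
    bernstein n s * pascal R n = pascal R n * diagonal fun i : Fin n => s ^ (i : ℕ) := by
  ext i k
  rw [mul_diagonal, mul_apply]
  simp only [bernstein, pascal, of_apply]
  calc ∑ j : Fin n,
        ((i : ℕ).choose j : R) * s ^ (j : ℕ) * (1 - s) ^ ((i : ℕ) - j) * ((j : ℕ).choose k)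
      = ∑ j ∈ range n,
        ((i : ℕ).choose j * j.choose k : R) * s ^ j * (1 - s) ^ ((i : ℕ) - j) := by
        rw [← Fin.sum_univ_eq_sum_range]
        exact sum_congr rfl fun j _ => by ring
    _ = ∑ j ∈ range (i + 1),
        ((i : ℕ).choose j * j.choose k : R) * s ^ j * (1 - s) ^ ((i : ℕ) - j) := by
        refine (sum_subset (range_subset_range.2 i.isLt) fun j _ hj => ?_).symm
        rw [Nat.choose_eq_zero_of_lt (by simpa using hj), Nat.cast_zero, zero_mul, zero_mul,
          zero_mul]
    _ = ((i : ℕ).choose k : R) * s ^ (k : ℕ) := by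
        rw [sum_choose_mul_choose_mul_pow, add_sub_cancel, one_pow, mul_one]

theorem bernstein_eq_pascal_mul_diagonal_mul_inv (s : R) :
    bernstein n s = pascal R n * diagonal (fun i : Fin n => s ^ (i : ℕ)) * (pascal R n)⁻¹ := by
  rw [← bernstein_mul_pascal, mul_nonsing_inv_cancel_right _ _ (by simp [det_pascal])]

end Matrix

/-- For every real `s`, `B_n^e(s) = P_n G_n(s) P_n⁻¹`. -/
theorem bernstein_spectral_factorization (n : ℕ) (s : ℝ)
    (B : Matrix (Fin n) (Fin n) ℝ)
    (hB : ∀ i j : Fin n, B i j =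
      if (j : ℕ) ≤ (i : ℕ) then
        ((i : ℕ).choose j : ℝ) * s ^ (j : ℕ) * (1 - s) ^ ((i : ℕ) - (j : ℕ))
      else 0)
    (P : Matrix (Fin n) (Fin n) ℝ)
    (hP : ∀ i j : Fin n, P i j = if (j : ℕ) ≤ (i : ℕ) then ((i : ℕ).choose j : ℝ) else 0)
    (G : Matrix (Fin n) (Fin n) ℝ)
    (hG : G = Matrix.diagonal (fun i : Fin n => s ^ (i : ℕ))) :
    B = P * G * P⁻¹ := by
  have hB_eq : B = Matrix.bernstein n s := by
    ext i j
    rw [hB, Matrix.bernstein, Matrix.of_apply, ite_eq_left_iff]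
    intro hij
    rw [Nat.choose_eq_zero_of_lt (not_le.1 hij), Nat.cast_zero, zero_mul, zero_mul]
  have hP_eq : P = Matrix.pascal ℝ n := by
    ext i j
    rw [hP, Matrix.pascal, Matrix.of_apply, ite_eq_left_iff]
    intro hij
    rw [Nat.choose_eq_zero_of_lt (not_le.1 hij), Nat.cast_zero]
  rw [hB_eq, hP_eq, hG, Matrix.bernstein_eq_pascal_mul_diagonal_mul_inv]
end

section
/- For every real s, B_n^e(s) = P_n G_n(-s) P_n G_n(-1), where P_n is the lower triangular Pascal matrix and G_n(t) = diag(1, t, ..., t^{n-1}). -/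
/-!
Entrywise, `(P G(x) P)ᵢⱼ = ∑ₖ C(i,k) C(k,j) xᵏ`. The identity `C(i,k) C(k,j) = C(i,j) C(i-j,k-j)`
and the binomial theorem turn this into `C(i,j) xʲ (1+x)^(i-j)`; at `x = -s`, multiplying by
`G(-1)` on the right turns `(-s)ʲ` into `sʲ`.
-/

open Finset Matrix

theorem Nat.sum_range_choose_mul_choose_mul_pow {R : Type*} [CommSemiring R] (x : R) (i j : ℕ) :
    ∑ k ∈ range (i + 1), (i.choose k * k.choose j : R) * x ^ k =
      i.choose j * x ^ j * (1 + x) ^ (i - j) := by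
  obtain hij | hji := lt_or_ge i j
  · rw [Nat.choose_eq_zero_of_lt hij, Nat.cast_zero, zero_mul, zero_mul]
    refine sum_eq_zero fun k hk => ?_
    have hkj : k < j := (Nat.lt_succ_iff.mp (mem_range.mp hk)).trans_lt hij
    rw [Nat.choose_eq_zero_of_lt hkj, Nat.cast_zero, mul_zero, zero_mul]
  obtain ⟨d, rfl⟩ := Nat.exists_eq_add_of_le hji
  have below_j : ∑ k ∈ range j, ((j + d).choose k * k.choose j : R) * x ^ k = 0 :=
    sum_eq_zero fun k hk => by
      rw [Nat.choose_eq_zero_of_lt (mem_range.mp hk), Nat.cast_zero, mul_zero, zero_mul]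
  rw [add_assoc, sum_range_add, below_j, zero_add, Nat.add_sub_cancel_left, add_comm 1 x,
    add_pow, mul_sum]
  refine sum_congr rfl fun m _ => ?_
  have h := Nat.choose_mul (n := j + d) (k := j + m) (Nat.le_add_right j m)
  rw [Nat.add_sub_cancel_left, Nat.add_sub_cancel_left] at h
  rw [← Nat.cast_mul, h, Nat.cast_mul, pow_add, one_pow]
  ring

-- `Nat.choose` vanishes above the diagonal, so no case split is needed.
def pascalMatrix (n : ℕ) (R : Type*) [Semiring R] : Matrix (Fin n) (Fin n) R :=
  of fun i j => ((i : ℕ).choose j : R)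

@[simp]
theorem pascalMatrix_apply (n : ℕ) (R : Type*) [Semiring R] (i j : Fin n) :
    pascalMatrix n R i j = ((i : ℕ).choose j : R) := rfl

theorem pascalMatrix_mul_diagonal_pow_mul_pascalMatrix {R : Type*} [CommSemiring R] (n : ℕ)
    (x : R) :
    pascalMatrix n R * diagonal (fun k : Fin n => x ^ (k : ℕ)) * pascalMatrix n R =
      of fun i j : Fin n => ((i : ℕ).choose j : R) * x ^ (j : ℕ) * (1 + x) ^ ((i : ℕ) - j) := by
  ext i j
  have vanish : ∀ k ∈ range n, k ∉ range (i + 1) →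
      ((i : ℕ).choose k * k.choose j : R) * x ^ k = 0 := fun k _ hk => by
    rw [Nat.choose_eq_zero_of_lt (by simpa using hk), Nat.cast_zero, zero_mul, zero_mul]
  rw [of_apply, ← Nat.sum_range_choose_mul_choose_mul_pow,
    sum_subset (range_subset_range.mpr i.isLt) vanish,
    ← Fin.sum_univ_eq_sum_range (fun k => ((i : ℕ).choose k * k.choose j : R) * x ^ k),
    mul_apply]
  simp only [mul_diagonal, pascalMatrix_apply]
  exact sum_congr rfl fun k _ => by ring

/-- For every real `s`, `B_n^e(s) = P_n G_n(-s) P_n G_n(-1)`. -/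
theorem bernstein_pascal_factorization (n : ℕ) (s : ℝ)
    (B : Matrix (Fin n) (Fin n) ℝ)
    (hB : ∀ i j : Fin n, B i j =
      if (j : ℕ) ≤ (i : ℕ) then
        ((i : ℕ).choose j : ℝ) * s ^ (j : ℕ) * (1 - s) ^ ((i : ℕ) - (j : ℕ))
      else 0)
    (P : Matrix (Fin n) (Fin n) ℝ)
    (hP : ∀ i j : Fin n, P i j = if (j : ℕ) ≤ (i : ℕ) then ((i : ℕ).choose j : ℝ) else 0)
    (G : ℝ → Matrix (Fin n) (Fin n) ℝ)
    (hG : ∀ u, G u = Matrix.diagonal (fun i : Fin n => u ^ (i : ℕ))) :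
    B = P * G (-s) * P * G (-1) := by
  have hP_pascal : P = pascalMatrix n ℝ := by
    ext i j
    rw [hP, pascalMatrix_apply, ite_eq_left_iff, not_le]
    exact fun h => by rw [Nat.choose_eq_zero_of_lt h, Nat.cast_zero]
  ext i j
  rw [hG, hG, hP_pascal, pascalMatrix_mul_diagonal_pow_mul_pascalMatrix, mul_diagonal, of_apply, hB]
  split_ifs with hji
  · have sign : (-s) ^ (j : ℕ) * (-1) ^ (j : ℕ) = s ^ (j : ℕ) := by
      rw [← mul_pow, neg_mul_neg, mul_one]
    rw [← sign, ← sub_eq_add_neg]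
    ring
  · rw [Nat.choose_eq_zero_of_lt (not_le.mp hji), Nat.cast_zero, zero_mul, zero_mul, zero_mul]
end

section
/- For every t > 0, P_n = D_n(t) T_n(t) D_n(t)^{-1}, where D_n(t) = diag(0!, 1!/t, 2!/t^2, ..., (n-1)!/t^{n-1}) and T_n(t) is the lower triangular Toeplitz matrix with (T_n(t))_{ij} = t^{i-j}/(i-j)! for i ≥ j. -/
open Matrix Nat

theorem Matrix.diagonal_mul_mul_inv_diagonal_apply {ι K : Type*} [Fintype ι] [DecidableEq ι]
    [Field K] {d : ι → K} (hd : ∀ i, d i ≠ 0) (A : Matrix ι ι K) (i j : ι) :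
    (diagonal d * A * (diagonal d)⁻¹) i j = d i * A i j / d j := by
  have hinv : (diagonal d)⁻¹ = diagonal d⁻¹ :=
    inv_eq_left_inv <| by
      rw [diagonal_mul_diagonal, ← diagonal_one]
      exact congrArg diagonal (funext fun i => inv_mul_cancel₀ (hd i))
  rw [hinv, mul_diagonal, diagonal_mul, Pi.inv_apply, div_eq_mul_inv]

theorem Nat.cast_choose_eq_factorial_mul_pow_div {K : Type*} [Field K] [CharZero K]
    {t : K} (ht : t ≠ 0) {i j : ℕ} (h : j ≤ i) :
    (i.choose j : K) = i ! / t ^ i * (t ^ (i - j) / (i - j)!) / (j ! / t ^ j) := by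
  have hpow : t ^ i = t ^ (i - j) * t ^ j := by rw [← pow_add, Nat.sub_add_cancel h]
  rw [Nat.cast_choose K h, hpow]
  field_simp

/-- For every `t > 0`, `P_n = D_n(t) T_n(t) D_n(t)⁻¹`, where
`D_n(t) = diag(0!, 1!/t, ..., (n-1)!/t^{n-1})` and `T_n(t)` is the lower triangular
Toeplitz matrix with `(T_n(t))_{ij} = t^{i-j}/(i-j)!` for `i ≥ j`. -/
theorem pascal_toeplitz_balancing (n : ℕ) (t : ℝ) (ht : 0 < t)
    (P : Matrix (Fin n) (Fin n) ℝ)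
    (hP : ∀ i j : Fin n, P i j = if (j : ℕ) ≤ (i : ℕ) then ((i : ℕ).choose j : ℝ) else 0)
    (D : Matrix (Fin n) (Fin n) ℝ)
    (hD : D = Matrix.diagonal (fun i : Fin n => ((i : ℕ).factorial : ℝ) / t ^ (i : ℕ)))
    (T : Matrix (Fin n) (Fin n) ℝ)
    (hT : ∀ i j : Fin n, T i j =
      if (j : ℕ) ≤ (i : ℕ) then t ^ ((i : ℕ) - (j : ℕ)) / (((i : ℕ) - (j : ℕ)).factorial : ℝ)
      else 0) :
    P = D * T * D⁻¹ := by
  ext i j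
  rw [hD, diagonal_mul_mul_inv_diagonal_apply (fun i => by positivity), hP, hT]
  split_ifs with h
  · exact cast_choose_eq_factorial_mul_pow_div ht.ne' h
  · simp
end

section
/- Let n > 1 be an integer. The function f_2 : (0, n-1) → R defined by f_2(t) = t^{⌈t⌉} (n-1)! / (t^{n-1} (⌈t⌉)!) is nonincreasing. -/
/-- For an integer `n > 1`, the function
`f₂(t) = t^{⌈t⌉} (n-1)! / (t^{n-1} ⌈t⌉!)` is nonincreasing on `(0, n-1)`. -/
theorem f2_antitoneOn (n : ℕ) (hn : 1 < n) :
    AntitoneOn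
      (fun t : ℝ => t ^ (⌈t⌉.toNat) * ((n - 1).factorial : ℝ) /
        (t ^ (n - 1) * ((⌈t⌉.toNat).factorial : ℝ)))
      (Set.Ioo (0 : ℝ) ((n : ℝ) - 1)) := by
  intro s hs t ht hst
  obtain ⟨hs0, hs1⟩ := hs
  obtain ⟨ht0, ht1⟩ := ht
  set k := ⌈s⌉.toNat with hk
  set m := ⌈t⌉.toNat with hm
  have hks : s ≤ (k : ℝ) := by
    rw [hk]
    have h1 : (1:ℤ) ≤ ⌈s⌉ := by exact_mod_cast Int.le_ceil_iff.mpr (by simpa using hs0)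
    have : ((⌈s⌉.toNat : ℤ) : ℝ) = (⌈s⌉ : ℝ) := by
      congr 1; exact Int.toNat_of_nonneg (by omega)
    calc s ≤ (⌈s⌉ : ℝ) := Int.le_ceil s
    _ = ((⌈s⌉.toNat : ℤ) : ℝ) := this.symm
    _ = (⌈s⌉.toNat : ℝ) := by push_cast; ring
  have hkm : k ≤ m := by
    rw [hk, hm]
    exact Int.toNat_le_toNat (Int.ceil_le_ceil hst)
  have hmn : m ≤ n - 1 := by
    have : ⌈t⌉ ≤ (n : ℤ) - 1 := by
      rw [Int.ceil_le]
      push_cast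
      exact ht1.le
    omega
  have hkn : k ≤ n - 1 := le_trans hkm hmn
  -- key inequality: s^(n-1-k) * k! ≤ t^(n-1-m) * m!
  have key : s ^ (n - 1 - k) * (k.factorial : ℝ) ≤ t ^ (n - 1 - m) * (m.factorial : ℝ) := by
    have hsplit : n - 1 - k = (n - 1 - m) + (m - k) := by omega
    rw [hsplit, pow_add]
    have h1 : s ^ (n - 1 - m) ≤ t ^ (n - 1 - m) := pow_le_pow_left₀ hs0.le hst _
    have h2 : s ^ (m - k) * (k.factorial : ℝ) ≤ (m.factorial : ℝ) := by
      have hsk1 : s ≤ ((k + 1 : ℕ) : ℝ) := le_trans hks (by push_cast; linarith)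
      calc s ^ (m - k) * (k.factorial : ℝ)
          ≤ ((k + 1 : ℕ) : ℝ) ^ (m - k) * (k.factorial : ℝ) := by
            gcongr
        _ ≤ (m.factorial : ℝ) := by
            have := Nat.factorial_mul_pow_le_factorial (m := k) (n := m - k)
            have h3 : k + (m - k) = m := by omega
            rw [h3] at this
            calc ((k + 1 : ℕ) : ℝ) ^ (m - k) * (k.factorial : ℝ)
                = ((k.factorial * (k + 1) ^ (m - k) : ℕ) : ℝ) := by push_cast; ring
              _ ≤ (m.factorial : ℝ) := Nat.cast_le.mpr this
    calc s ^ (n - 1 - m) * s ^ (m - k) * (k.factorial : ℝ)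
        = s ^ (n - 1 - m) * (s ^ (m - k) * (k.factorial : ℝ)) := by ring
      _ ≤ t ^ (n - 1 - m) * (m.factorial : ℝ) := by
          apply mul_le_mul h1 h2 (by positivity) (by positivity)
  -- now the main goal
  simp only
  rw [div_le_div_iff₀ (by positivity) (by positivity)]
  have hsexp : s ^ (n - 1) = s ^ k * s ^ (n - 1 - k) := by
    rw [← pow_add]; congr 1; omega
  have htexp : t ^ (n - 1) = t ^ m * t ^ (n - 1 - m) := by
    rw [← pow_add]; congr 1; omega
  rw [hsexp, htexp]
  have hfac : (0:ℝ) < ((n - 1).factorial : ℝ) := by positivity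
  have := mul_le_mul_of_nonneg_left key (by positivity : (0:ℝ) ≤ t ^ m * s ^ k * ((n-1).factorial : ℝ))
  nlinarith [pow_pos hs0 k, pow_pos ht0 m]
end

section
/- Let n > 2 and k ≥ 1 be integers. If there exists a real t̃ with k < t̃ < k+1 and t̃^{n-2} = (n-1)!/(k+1), then k = ⌊((n-1)!)^{1/(n-1)}⌋. -/
/-! With `F = (n-1)!` and `m = n - 2 ≥ 1`, the hypothesis says `F = t^m (k+1)`. Since
`k < t < k+1`, this gives `k^(m+1) < F < (k+1)^(m+1)`, and taking `(m+1)`-th roots pins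
`F^(1/(m+1))` strictly between `k` and `k+1`. -/

theorem Nat.floor_rpow_inv_eq {x z : ℝ} {k : ℕ} (hx : 0 ≤ x) (hz : 0 < z)
    (hlo : (k : ℝ) ^ z ≤ x) (hhi : x < ((k : ℝ) + 1) ^ z) : ⌊x ^ z⁻¹⌋₊ = k := by
  rw [Nat.floor_eq_iff (by positivity), Real.le_rpow_inv_iff_of_pos k.cast_nonneg hx hz,
    Real.rpow_inv_lt_iff_of_pos hx (by positivity) hz]
  exact ⟨hlo, hhi⟩

section Bracket

variable {a t : ℝ}

theorem pow_succ_lt_pow_mul_add_one (ha : 0 ≤ a) (hat : a < t) (m : ℕ) :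
    a ^ (m + 1) < t ^ m * (a + 1) :=
  calc a ^ (m + 1) = a ^ m * a := pow_succ a m
    _ < t ^ m * (a + 1) :=
      mul_lt_mul' (pow_le_pow_left₀ ha hat.le m) (lt_add_one a) ha (pow_pos (ha.trans_lt hat) m)

theorem pow_mul_add_one_lt_pow_succ (ht : 0 ≤ t) (hta : t < a + 1) {m : ℕ} (hm : m ≠ 0) :
    t ^ m * (a + 1) < (a + 1) ^ (m + 1) := by
  rw [pow_succ]
  exact mul_lt_mul_of_pos_right (pow_lt_pow_left₀ hta ht hm) (by linarith)

end Bracket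

theorem optimum_k_formula_general (n k : ℕ) (hn : 2 < n) (t : ℝ)
    (ht1 : (k : ℝ) < t) (ht2 : t < (k : ℝ) + 1)
    (heq : t ^ (n - 2) = ((n - 1).factorial : ℝ) / ((k : ℝ) + 1)) :
    k = Nat.floor ((((n - 1).factorial : ℝ)) ^ ((1 : ℝ) / ((n : ℝ) - 1))) := by
  obtain ⟨m, rfl⟩ : ∃ m, n = m + 2 := ⟨n - 2, by omega⟩
  have hm : m ≠ 0 := by omega
  have hk : (0 : ℝ) ≤ k := k.cast_nonneg
  rw [Nat.add_sub_cancel] at heq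
  rw [show m + 2 - 1 = m + 1 by omega] at heq ⊢
  have hF : ((m + 1).factorial : ℝ) = t ^ m * ((k : ℝ) + 1) := by
    rw [heq, div_mul_cancel₀ _ (by positivity)]
  have hexp : ((m + 2 : ℕ) : ℝ) - 1 = ((m + 1 : ℕ) : ℝ) := by push_cast; ring
  rw [hexp, one_div, eq_comm]
  apply Nat.floor_rpow_inv_eq (by positivity) (by positivity)
  · rw [Real.rpow_natCast, hF]
    exact (pow_succ_lt_pow_mul_add_one hk ht1 m).le
  · rw [Real.rpow_natCast, hF]
    exact pow_mul_add_one_lt_pow_succ (hk.trans ht1.le) ht2 hm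

/-- If there exists `t̃` with `k < t̃ < k+1` and
`t̃^{n-2} = (n-1)!/(k+1)`, then `k = ⌊((n-1)!)^{1/(n-1)}⌋`. -/
theorem optimum_k_formula (n k : ℕ) (hn : 2 < n) (hk : 1 ≤ k) (t : ℝ)
    (ht1 : (k : ℝ) < t) (ht2 : t < (k : ℝ) + 1)
    (heq : t ^ (n - 2) = ((n - 1).factorial : ℝ) / ((k : ℝ) + 1)) :
    k = Nat.floor ((((n - 1).factorial : ℝ)) ^ ((1 : ℝ) / ((n : ℝ) - 1))) :=
  optimum_k_formula_general n k hn t ht1 ht2 heq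
end

section
/- Let n > 3 be an integer and suppose k is an integer with 1 ≤ k ≤ n-2 such that k^{n-1} < (n-1)! and k^{n-1} + k^{n-2} ≥ (n-1)!. Then k > (n-1)/e, where e is Euler's number. -/
lemma fact_pow_aux (m : ℕ) :
    ((m : ℝ) + 1) ^ (m + 1) ≤ ((m + 1).factorial : ℝ) * Real.exp 1 ^ m := by
  induction m with
  | zero => simp
  | succ m ih =>
    have e1 : (0:ℝ) < (m:ℝ) + 1 := by positivity
    have key : ((m:ℝ) + 2) ^ (m + 1) ≤ Real.exp 1 * ((m:ℝ) + 1) ^ (m + 1) := by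
      have h0 : ((m:ℝ) + 2) = (1 + 1/((m:ℝ)+1)) * ((m:ℝ)+1) := by field_simp; ring
      have h1 : (1 + 1/((m:ℝ)+1)) ≤ Real.exp (1/((m:ℝ)+1)) := by
        have := Real.add_one_le_exp (1/((m:ℝ)+1)); linarith
      calc ((m:ℝ) + 2) ^ (m + 1)
          = (1 + 1/((m:ℝ)+1)) ^ (m+1) * ((m:ℝ)+1) ^ (m+1) := by rw [← mul_pow, ← h0]
        _ ≤ (Real.exp (1/((m:ℝ)+1))) ^ (m+1) * ((m:ℝ)+1) ^ (m+1) := by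
            gcongr
        _ = Real.exp 1 * ((m:ℝ)+1) ^ (m+1) := by
            rw [← Real.exp_nat_mul]
            congr 1
            push_cast
            field_simp
    have hfac : (((m+2).factorial : ℝ)) = ((m:ℝ)+2) * ((m+1).factorial : ℝ) := by
      rw [Nat.factorial_succ]; push_cast; ring
    have hexp : (0:ℝ) < Real.exp 1 := Real.exp_pos 1
    push_cast
    calc ((m:ℝ) + 1 + 1) ^ (m + 1 + 1)
        = ((m:ℝ)+2) * ((m:ℝ)+2) ^ (m+1) := by ring
      _ ≤ ((m:ℝ)+2) * (Real.exp 1 * ((m:ℝ)+1) ^ (m+1)) := by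
          have : (0:ℝ) ≤ (m:ℝ)+2 := by positivity
          exact mul_le_mul_of_nonneg_left key this
      _ ≤ ((m:ℝ)+2) * (Real.exp 1 * (((m+1).factorial : ℝ) * Real.exp 1 ^ m)) := by
          have h2 : (0:ℝ) ≤ (m:ℝ)+2 := by positivity
          have h3 := mul_le_mul_of_nonneg_left ih hexp.le
          exact mul_le_mul_of_nonneg_left h3 h2
      _ = ((m+2).factorial : ℝ) * Real.exp 1 ^ (m+1) := by rw [hfac]; ring

/-- If `n > 3`, `1 ≤ k ≤ n-2`, `k^{n-1} < (n-1)!` and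
`k^{n-1} + k^{n-2} ≥ (n-1)!`, then `k > (n-1)/e`. -/
theorem k_lower_bound (n k : ℕ) (hn : 3 < n) (hk1 : 1 ≤ k) (hk2 : k ≤ n - 2)
    (h1 : k ^ (n - 1) < (n - 1).factorial)
    (h2 : (n - 1).factorial ≤ k ^ (n - 1) + k ^ (n - 2)) :
    ((n : ℝ) - 1) / Real.exp 1 < (k : ℝ) := by
  by_contra hcon
  push_neg at hcon
  set e := Real.exp 1 with he
  have hepos : (0:ℝ) < e := Real.exp_pos 1
  have hn4 : (4:ℝ) ≤ (n:ℝ) := by exact_mod_cast hn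
  obtain ⟨m, rfl⟩ : ∃ m, n = m + 2 := ⟨n - 2, by omega⟩
  have hm2 : 2 ≤ m := by omega
  have hsub1 : m + 2 - 1 = m + 1 := by omega
  have hsub2 : m + 2 - 2 = m := by omega
  simp only [hsub1, hsub2] at h1 h2
  -- real cast of h2
  have h2R : (((m+1).factorial : ℝ)) ≤ (k:ℝ) ^ (m+1) + (k:ℝ) ^ m := by exact_mod_cast h2
  have hcast : ((m:ℝ) + 2) - 1 = (m:ℝ) + 1 := by ring
  have hncast : ((m + 2 : ℕ) : ℝ) = (m:ℝ) + 2 := by push_cast; ring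
  rw [hncast, hcast] at hcon
  obtain ⟨x, hx⟩ : ∃ x : ℝ, x = ((m:ℝ) + 1) / e := ⟨_, rfl⟩
  rw [← hx] at hcon
  have hxpos : 0 < x := by rw [hx]; positivity
  have hkx : (k:ℝ) ≤ x := hcon
  have hknn : (0:ℝ) ≤ (k:ℝ) := Nat.cast_nonneg k
  -- main chain
  have key := fact_pow_aux m
  have hxe : ((m:ℝ) + 1) = x * e := by
    rw [hx, div_mul_cancel₀]
    exact Real.exp_ne_zero 1
  have chain : x ^ m * (x * e) * e ^ m ≤ x ^ m * ((k:ℝ) + 1) * e ^ m := by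
    have step1 : (k:ℝ) ^ (m+1) + (k:ℝ) ^ m ≤ x ^ m * ((k:ℝ) + 1) := by
      have : (k:ℝ) ^ (m+1) + (k:ℝ) ^ m = (k:ℝ) ^ m * ((k:ℝ) + 1) := by ring
      rw [this]
      have hkm : (k:ℝ) ^ m ≤ x ^ m := pow_le_pow_left₀ hknn hkx m
      have : (0:ℝ) ≤ (k:ℝ) + 1 := by positivity
      exact mul_le_mul_of_nonneg_right hkm this
    have lhs_eq : ((m:ℝ) + 1) ^ (m + 1) = x ^ m * (x * e) * e ^ m := by
      rw [hxe]; ring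
    calc x ^ m * (x * e) * e ^ m = ((m:ℝ) + 1) ^ (m+1) := lhs_eq.symm
      _ ≤ ((m+1).factorial : ℝ) * e ^ m := key
      _ ≤ ((k:ℝ) ^ (m+1) + (k:ℝ) ^ m) * e ^ m := by
          exact mul_le_mul_of_nonneg_right h2R (by positivity)
      _ ≤ x ^ m * ((k:ℝ) + 1) * e ^ m := by
          exact mul_le_mul_of_nonneg_right step1 (by positivity)
  have hcancel : x * e ≤ (k:ℝ) + 1 := by
    have hpos : (0:ℝ) < x ^ m * e ^ m := by positivity
    nlinarith [chain]
  -- so (m+1) ≤ k+1, i.e. k ≥ m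
  rw [← hxe] at hcancel
  have hkm : (m:ℝ) ≤ (k:ℝ) := by linarith
  -- then m ≤ k ≤ x = (m+1)/e, so e*m ≤ m+1, contradiction with e > 2.7, m ≥ 2
  have he27 : (2.7:ℝ) < e := by
    rw [he]; linarith [Real.exp_one_gt_d9]
  have hm2R : (2:ℝ) ≤ (m:ℝ) := by exact_mod_cast hm2
  have hle : (m:ℝ) ≤ ((m:ℝ)+1)/e := by rw [← hx]; exact le_trans hkm hkx
  have : (m:ℝ) * e ≤ (m:ℝ) + 1 := by
    rw [le_div_iff₀ hepos] at hle
    linarith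
  nlinarith
end
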